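/- Let 3K_2 be the multigraph consisting of two vertices joined by three parallel edges, with any fixed orientation, and let (k_1, k_2, k_3) ∈ ℤ_{>0}^3 with k_1 ≤ k_2 ≤ k_3 (where k_i is the capacity of edge e_i). Then the number of nowhere-zero (k_1,k_2,k_3)-flows on 3K_2 is: (2k_1 − 2)(2k_2 − 3) if k_3 > k_1 + k_2, and −k_1² + 2k_1k_2 + 2k_1k_3 − 5k_1 − k_2² + 2k_2k_3 − 3k_2 − k_3² − k_3 + 6 if k_3 ≤ k_1 + k_2. -/

import Mathlib

open Finset

/-- A finite multigraph with a fixed (reference) orientation is given by vertex type `V`,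
edge type `E`, and head/tail maps `hd tl : E → V`.  `IsFlow hd tl x` says that the integer
edge labeling `x` satisfies conservation of flow at every vertex. -/
def IsFlow {V E : Type*} [Fintype E] [DecidableEq V] (hd tl : E → V) (x : E → ℤ) : Prop :=
  ∀ v : V, ∑ e ∈ Finset.univ.filter (fun e => hd e = v), x e =
    ∑ e ∈ Finset.univ.filter (fun e => tl e = v), x e

/-- `flowCount hd tl k` is the number of nowhere-zero `k`-flows, i.e. integral flows `x`
with `x e ≠ 0` and `|x e| < k e` for every edge `e`. -/
noncomputable def flowCount {V E : Type*} [Fintype E] [DecidableEq V]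
    (hd tl : E → V) (k : E → ℤ) : ℕ :=
  Nat.card {x : E → ℤ // IsFlow hd tl x ∧ ∀ e, x e ≠ 0 ∧ |x e| < k e}

/-- The number of connected components of the underlying undirected multigraph. -/
noncomputable def numComponents {V E : Type*} [Fintype V] (hd tl : E → V) : ℕ :=
  Nat.card (SimpleGraph.fromRel
    fun u v => ∃ e, (hd e = u ∧ tl e = v) ∨ (hd e = v ∧ tl e = u)).ConnectedComponent

/-- The cyclomatic number `ξ_G = |E| − |V| + c(G)`. -/
noncomputable def cyclomatic {V E : Type*} [Fintype V] [Fintype E] (hd tl : E → V) : ℕ :=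
  Fintype.card E + numComponents hd tl - Fintype.card V

/-- An edge `b` is a bridge if deleting it increases the number of connected components. -/
def IsBridge {V E : Type*} [Fintype V] (hd tl : E → V) (b : E) : Prop :=
  numComponents hd tl <
    numComponents (fun e : {e : E // e ≠ b} => hd e.1) (fun e : {e : E // e ≠ b} => tl e.1)

/-- An orientation (given by head/tail maps) is totally cyclic if every edge lies in a
coherently oriented cycle (a cyclic sequence of distinct edges in which the head of each
edge is the tail of the next). -/
def IsTotallyCyclic {V E : Type*} (hd tl : E → V) : Prop :=
  ∀ e : E, ∃ (n : ℕ) (c : Fin (n + 1) → E), Function.Injective c ∧ (∃ i, c i = e) ∧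
    ∀ i : Fin (n + 1), hd (c i) = tl (c (i + 1))

/-- Reorienting the reference orientation by `σ : E → Bool` (`true` = keep the reference
direction, `false` = reverse it): the new head map. -/
def oHead {V E : Type*} (hd tl : E → V) (σ : E → Bool) : E → V :=
  fun e => if σ e then hd e else tl e

/-- Reorienting the reference orientation by `σ : E → Bool`: the new tail map. -/
def oTail {V E : Type*} (hd tl : E → V) (σ : E → Bool) : E → V :=
  fun e => if σ e then tl e else hd e

/-- An orientation `σ` is compatible with an integral flow `x` if it keeps the reference
direction on edges with positive flow and reverses it on edges with negative flow. -/
def Compatible {E : Type*} (x : E → ℤ) (σ : E → Bool) : Prop :=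
  ∀ e, (0 < x e → σ e = true) ∧ (x e < 0 → σ e = false)

/-! Reversing an edge and negating the flow on it matches the nowhere-zero flows of the two
orientations, so all three edges may be taken to point the same way. A flow is then a triple
`(a, b, -(a + b))`. For `0 < a < k₁ ≤ k₂` the row of `a` (and that of `-a`) contains
`min k₁ (k₂ - a) + k₁ - 3` admissible `b`, and summing over `0 < a < k₀` gives
`2 (k₀ - 1) (2 k₁ - 3) - m (m - 1)` with `m = max 0 (k₀ + k₁ - k₂)`: without the third
capacity there would be `2 (k₀ - 1) (2 k₁ - 3)` pairs, and `m (m - 1)` of them have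
`|a + b| ≥ k₂`. -/

section Reorientation

variable {V E : Type*}

/-- A flow relative to the reference orientation, read relative to the orientation `σ`. -/
def reorient (σ : E → Bool) (x : E → ℤ) : E → ℤ :=
  fun e => if σ e then x e else -x e

lemma reorient_involutive (σ : E → Bool) : Function.Involutive (reorient σ) := by
  intro x
  funext e
  by_cases h : σ e <;> simp [reorient, h]

lemma abs_reorient (σ : E → Bool) (x : E → ℤ) (e : E) : |reorient σ x e| = |x e| := by
  by_cases h : σ e <;> simp [reorient, h]

lemma reorient_ne_zero_iff (σ : E → Bool) (x : E → ℤ) (e : E) :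
    reorient σ x e ≠ 0 ↔ x e ≠ 0 := by
  by_cases h : σ e <;> simp [reorient, h]

lemma isFlow_iff_sum_eq_zero [Fintype E] [DecidableEq V] (hd tl : E → V) (x : E → ℤ) :
    IsFlow hd tl x ↔
      ∀ v, ∑ e, ((if hd e = v then x e else 0) - (if tl e = v then x e else 0)) = 0 := by
  simp only [IsFlow, sum_sub_distrib, ← sum_filter, sub_eq_zero]

lemma isFlow_reorient_iff [Fintype E] [DecidableEq V] (hd tl : E → V) (σ : E → Bool)
    (x : E → ℤ) :
    IsFlow (oHead hd tl σ) (oTail hd tl σ) (reorient σ x) ↔ IsFlow hd tl x := by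
  simp only [isFlow_iff_sum_eq_zero]
  refine forall_congr' fun v => Eq.congr_left (sum_congr rfl fun e _ => ?_)
  by_cases h : σ e
  · simp [oHead, oTail, reorient, h]
  · simp only [oHead, oTail, reorient, h, Bool.false_eq_true, if_false]
    split_ifs <;> ring

lemma flowCount_reorient [Fintype E] [DecidableEq V] (hd tl : E → V) (σ : E → Bool)
    (k : E → ℤ) :
    flowCount (oHead hd tl σ) (oTail hd tl σ) k = flowCount hd tl k := by
  refine (Nat.card_congr ((reorient_involutive σ).toPerm _ |>.subtypeEquiv fun x => ?_)).symm
  simp [isFlow_reorient_iff, reorient_ne_zero_iff, abs_reorient]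

lemma flowCount_eq_of_parallel [Fintype E] [DecidableEq V] (hd tl : E → V) {u w : V}
    (hpar : ∀ e, ({hd e, tl e} : Finset V) = {u, w}) (k : E → ℤ) :
    flowCount hd tl k = flowCount (fun _ : E => u) (fun _ => w) k := by
  let σ : E → Bool := fun e => decide (hd e = u)
  have hends : ∀ e, hd e = u ∧ tl e = w ∨ hd e = w ∧ tl e = u := fun e =>
    Set.pair_eq_pair_iff.mp (by simpa using congrArg ((↑) : Finset V → Set V) (hpar e))
  have hhead : oHead hd tl σ = fun _ => u := by
    funext e
    rcases hends e with ⟨h, -⟩ | ⟨-, h⟩ <;> by_cases hu : hd e = u <;> simp [oHead, σ, hu, h]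
  have htail : oTail hd tl σ = fun _ => w := by
    funext e
    rcases hends e with ⟨hu, h⟩ | ⟨h, hu'⟩
    · simp [oTail, σ, hu, h]
    · by_cases hu : hd e = u <;> simp_all [oTail, σ]
  rw [← flowCount_reorient hd tl σ, hhead, htail]

lemma isFlow_const_iff [Fintype E] [DecidableEq V] {u w : V} (huw : u ≠ w) (x : E → ℤ) :
    IsFlow (fun _ : E => u) (fun _ => w) x ↔ ∑ e, x e = 0 := by
  constructor
  · intro h
    simpa [huw.symm] using h u
  · intro h v
    by_cases hu : u = v <;> by_cases hw : w = v <;> simp_all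

end Reorientation

/-- The pairs `(a, b)` for which `(a, b, -(a + b))` is a nowhere-zero `(k₀, k₁, k₂)`-flow
on three parallel edges with a common orientation. -/
noncomputable def flowPairs (k₀ k₁ k₂ : ℤ) : Finset (ℤ × ℤ) :=
  (Ioo (-k₀) k₀ ×ˢ Ioo (-k₁) k₁).filter
    fun p => p.1 ≠ 0 ∧ p.2 ≠ 0 ∧ p.1 + p.2 ≠ 0 ∧ |p.1 + p.2| < k₂

lemma mem_flowPairs {k₀ k₁ k₂ : ℤ} {p : ℤ × ℤ} :
    p ∈ flowPairs k₀ k₁ k₂ ↔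
      (p.1 ≠ 0 ∧ |p.1| < k₀) ∧ (p.2 ≠ 0 ∧ |p.2| < k₁) ∧
        (p.1 + p.2 ≠ 0 ∧ |p.1 + p.2| < k₂) := by
  simp only [flowPairs, mem_filter, mem_product, mem_Ioo, abs_lt]
  tauto

lemma flowCount_three_parallel {V : Type*} [DecidableEq V] {u w : V} (huw : u ≠ w)
    (k : Fin 3 → ℤ) :
    flowCount (fun _ : Fin 3 => u) (fun _ => w) k = #(flowPairs (k 0) (k 1) (k 2)) := by
  rw [flowCount, ← Nat.card_eq_finsetCard]
  refine Nat.card_congr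
    { toFun := fun x => ⟨(x.1 0, x.1 1), ?_⟩
      invFun := fun p => ⟨![p.1.1, p.1.2, -(p.1.1 + p.1.2)], ?_⟩
      left_inv := ?_
      right_inv := fun _ => rfl }
  · obtain ⟨x, hflow, hx⟩ := x
    rw [isFlow_const_iff huw, Fin.sum_univ_three] at hflow
    have hx₂ : x 2 = -(x 0 + x 1) := by omega
    have h₂ := hx 2
    rw [hx₂, neg_ne_zero, abs_neg] at h₂
    exact mem_flowPairs.mpr ⟨hx 0, hx 1, h₂⟩
  · obtain ⟨⟨a, b⟩, hp⟩ := p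
    obtain ⟨ha, hb, hab⟩ := mem_flowPairs.mp hp
    refine ⟨(isFlow_const_iff huw _).mpr (by simp [Fin.sum_univ_three]), ?_⟩
    intro e
    fin_cases e
    exacts [ha, hb, by rwa [← neg_ne_zero, ← abs_neg] at hab]
  · rintro ⟨x, hflow, -⟩
    rw [isFlow_const_iff huw, Fin.sum_univ_three] at hflow
    ext i
    fin_cases i <;> simp; omega

noncomputable def flowRow (k₁ k₂ a : ℤ) : Finset ℤ :=
  (Ioo (-k₁) k₁).filter fun b => b ≠ 0 ∧ a + b ≠ 0 ∧ |a + b| < k₂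

lemma mem_flowRow {k₁ k₂ a b : ℤ} :
    b ∈ flowRow k₁ k₂ a ↔
      -k₁ < b ∧ b < k₁ ∧ b ≠ 0 ∧ a + b ≠ 0 ∧ -k₂ < a + b ∧ a + b < k₂ := by
  simp only [flowRow, mem_filter, mem_Ioo, abs_lt]
  tauto

lemma card_flowRow_neg (k₁ k₂ a : ℤ) : #(flowRow k₁ k₂ (-a)) = #(flowRow k₁ k₂ a) :=
  card_nbij' Neg.neg Neg.neg
    (fun b hb => by simp only [mem_coe, mem_flowRow] at *; omega)
    (fun b hb => by simp only [mem_coe, mem_flowRow] at *; omega)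
    (fun b _ => neg_neg b) (fun b _ => neg_neg b)

lemma card_flowRow {k₁ k₂ a : ℤ} (ha : 0 < a) (hak : a < k₁) (hk : k₁ ≤ k₂) :
    (#(flowRow k₁ k₂ a) : ℤ) = min k₁ (k₂ - a) + k₁ - 3 := by
  have hrow : flowRow k₁ k₂ a = ((Ioo (-k₁) (min k₁ (k₂ - a))).erase 0).erase (-a) := by
    ext b
    simp only [mem_flowRow, mem_erase, mem_Ioo]
    omega
  have h₀ : (0 : ℤ) ∈ Ioo (-k₁) (min k₁ (k₂ - a)) := by
    simp only [mem_Ioo]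
    omega
  have hneg : -a ∈ (Ioo (-k₁) (min k₁ (k₂ - a))).erase 0 := by
    simp only [mem_erase, mem_Ioo]
    omega
  rw [hrow, card_erase_of_mem hneg, card_erase_of_mem h₀, Int.card_Ioo]
  omega

lemma flowPairs_succ {k₀ k₁ k₂ : ℤ} (hk₀ : 0 < k₀) :
    flowPairs (k₀ + 1) k₁ k₂ =
      flowPairs k₀ k₁ k₂ ∪ ({k₀} ×ˢ flowRow k₁ k₂ k₀ ∪ {-k₀} ×ˢ flowRow k₁ k₂ (-k₀)) := by
  ext ⟨a, b⟩
  simp only [mem_union, mem_product, mem_singleton, mem_flowPairs, mem_flowRow, abs_lt]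
  omega

lemma card_flowPairs_succ {k₀ k₁ k₂ : ℤ} (hk₀ : 0 < k₀) (h₀₁ : k₀ < k₁) (h₁₂ : k₁ ≤ k₂) :
    (#(flowPairs (k₀ + 1) k₁ k₂) : ℤ) =
      #(flowPairs k₀ k₁ k₂) + 2 * (min k₁ (k₂ - k₀) + k₁ - 3) := by
  have hdisj : Disjoint (flowPairs k₀ k₁ k₂)
      ({k₀} ×ˢ flowRow k₁ k₂ k₀ ∪ {-k₀} ×ˢ flowRow k₁ k₂ (-k₀)) := by
    rw [disjoint_left]
    rintro ⟨a, b⟩ hp hq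
    simp only [mem_union, mem_product, mem_singleton, mem_flowPairs, abs_lt] at hp hq
    omega
  have hrows : Disjoint ({k₀} ×ˢ flowRow k₁ k₂ k₀) ({-k₀} ×ˢ flowRow k₁ k₂ (-k₀)) :=
    disjoint_product.mpr (Or.inl (disjoint_singleton.mpr (by omega)))
  rw [flowPairs_succ hk₀, card_union_of_disjoint hdisj, card_union_of_disjoint hrows,
    card_product, card_product, card_singleton, card_singleton, card_flowRow_neg]
  push_cast
  rw [card_flowRow hk₀ h₀₁ h₁₂]
  ring

lemma flowPairs_one (k₁ k₂ : ℤ) : flowPairs 1 k₁ k₂ = ∅ := by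
  ext ⟨a, b⟩
  simp only [mem_flowPairs, abs_lt, notMem_empty, iff_false]
  omega

theorem card_flowPairs {k₀ k₁ k₂ : ℤ} (hk₀ : 1 ≤ k₀) (h₀₁ : k₀ ≤ k₁) (h₁₂ : k₁ ≤ k₂) :
    (#(flowPairs k₀ k₁ k₂) : ℤ) =
      2 * (k₀ - 1) * (2 * k₁ - 3) - max 0 (k₀ + k₁ - k₂) * (max 0 (k₀ + k₁ - k₂) - 1) := by
  induction k₀, hk₀ using Int.leInduction with
  | base =>
    have hm : max 0 (1 + k₁ - k₂) = 0 ∨ max 0 (1 + k₁ - k₂) = 1 := by omega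
    rcases hm with hm | hm <;> simp [flowPairs_one, hm]
  | succ k₀ hk₀ ih =>
    rw [card_flowPairs_succ hk₀ (by omega) h₁₂, ih (by omega)]
    rcases le_or_gt k₂ (k₀ + k₁) with h | h
    · rw [max_eq_right (by omega), max_eq_right (by omega), min_eq_right (by omega)]
      ring
    · rw [max_eq_left (by omega), max_eq_left (by omega), min_eq_left (by omega)]
      ring

/-- For the multigraph `3K₂` (two vertices joined by three parallel
edges) with any fixed orientation, and capacities `0 < k₁ ≤ k₂ ≤ k₃`, the number of
nowhere-zero `(k₁,k₂,k₃)`-flows is `(2k₁ − 2)(2k₂ − 3)` if `k₃ > k₁ + k₂`, and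
`−k₁² + 2k₁k₂ + 2k₁k₃ − 5k₁ − k₂² + 2k₂k₃ − 3k₂ − k₃² − k₃ + 6` if `k₃ ≤ k₁ + k₂`. -/
theorem flow_count_3K2
    (hd tl : Fin 3 → Fin 2)
    (h0 : ({hd 0, tl 0} : Finset (Fin 2)) = {0, 1})
    (h1 : ({hd 1, tl 1} : Finset (Fin 2)) = {0, 1})
    (h2 : ({hd 2, tl 2} : Finset (Fin 2)) = {0, 1})
    (k : Fin 3 → ℤ) (hk : ∀ e, 0 < k e) (h01 : k 0 ≤ k 1) (h12 : k 1 ≤ k 2) :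
    (k 0 + k 1 < k 2 → (flowCount hd tl k : ℤ) = (2 * k 0 - 2) * (2 * k 1 - 3)) ∧
    (k 2 ≤ k 0 + k 1 → (flowCount hd tl k : ℤ) =
      -(k 0)^2 + 2 * k 0 * k 1 + 2 * k 0 * k 2 - 5 * k 0
        - (k 1)^2 + 2 * k 1 * k 2 - 3 * k 1 - (k 2)^2 - k 2 + 6) := by
  have hpar : ∀ e, ({hd e, tl e} : Finset (Fin 2)) = {0, 1} := by
    intro e
    fin_cases e <;> assumption
  rw [flowCount_eq_of_parallel hd tl hpar, flowCount_three_parallel zero_ne_one,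
    card_flowPairs (hk 0) h01 h12]
  refine ⟨fun h => ?_, fun h => ?_⟩
  · rw [max_eq_left (by omega)]
    ring
  · rw [max_eq_right (by omega)]
    ring
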